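/- Let G = (V, E) be the 2-dimensional rectangle grid graph with m rows and n columns, and let G' = (V, E ∪ {e}) where e is an edge added between any two non-adjacent vertices of V. Then the set {P, Q, R, S} of the four corners of the grid is a resolving set of G', and consequently β(G') ≤ 4. -/

import Mathlib

/-- A set `R` of vertices resolves the graph `H` if every pair of distinct
vertices is distinguished by some vertex of `R`. -/
def resolves {V : Type*} (H : SimpleGraph V) (R : Set V) : Prop :=
  ∀ a b : V, a ≠ b → ∃ x ∈ R, H.dist a x ≠ H.dist b x

/-- The metric dimension: the least cardinality of a (finite) resolving set. -/
noncomputable def metricDim {V : Type*} (H : SimpleGraph V) : ℕ :=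
  sInf {k | ∃ R : Finset V, R.card = k ∧ resolves H (R : Set V)}

/-- The rectangle grid graph with `n` columns and `m` rows: the vertex `(i, j)`
(with `i : Fin n`, `j : Fin m`) represents the grid point in column `i + 1` and row
`j + 1`; two vertices are adjacent when they differ by exactly 1 in exactly one
coordinate, i.e. when their ℓ¹ distance is 1. -/
def grid2 (n m : ℕ) : SimpleGraph (Fin n × Fin m) where
  Adj a b := |((a.1 : ℕ) : ℤ) - ((b.1 : ℕ) : ℤ)| + |((a.2 : ℕ) : ℤ) - ((b.2 : ℕ) : ℤ)| = 1
  symm := by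
    constructor
    intro a b h
    rw [abs_sub_comm ((b.1 : ℕ) : ℤ), abs_sub_comm ((b.2 : ℕ) : ℤ)]
    exact h
  loopless := by constructor; intro a h; simp at h

/-!
Adding an edge `uv` to a connected graph turns the distance into
`min (d a b) (min (d a u + 1 + d v b) (d a v + 1 + d u b))`. In the grid every vertex lies on a
geodesic between two opposite corners, and this forces the new distances to `P` and `R` to
determine the old distance to `P`; likewise `Q` and `S` determine the old distance to `Q`. The
grid distances to two adjacent corners `P`, `Q` determine the vertex.
-/

namespace SimpleGraph

section SupEdge

variable {V : Type*} {H H' : SimpleGraph V} {a b u v : V}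

lemma Reachable.dist_le_of_le (hle : H ≤ H') (h : H.Reachable a b) :
    H'.dist a b ≤ H.dist a b := by
  obtain ⟨p, hp⟩ := h.exists_walk_length_eq_dist
  simpa [hp] using dist_le (p.mapLe hle)

lemma Preconnected.le_length_of_walk_sup_edge (hH : H.Preconnected)
    (w : (H ⊔ edge u v).Walk a b) :
    min (H.dist a b) (min (H.dist a u + 1 + H.dist v b) (H.dist a v + 1 + H.dist u b)) ≤
      w.length := by
  induction w with
  | nil => simp
  | @cons x y b hxy w ih =>
    rw [Walk.length_cons]
    rcases hxy with hxy | hxy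
    · have hd : H.dist x y = 1 := dist_eq_one_iff_adj.mpr hxy
      have := (hH x y).dist_triangle_left b
      have := (hH x y).dist_triangle_left u
      have := (hH x y).dist_triangle_left v
      omega
    · obtain ⟨⟨rfl, rfl⟩ | ⟨rfl, rfl⟩, -⟩ := (edge_adj u v x y).mp hxy <;> simp at ih ⊢ <;> omega

theorem Preconnected.dist_sup_edge (hH : H.Preconnected) (u v a b : V) :
    (H ⊔ edge u v).dist a b =
      min (H.dist a b) (min (H.dist a u + 1 + H.dist v b) (H.dist a v + 1 + H.dist u b)) := by
  have hle : H ≤ H ⊔ edge u v := le_sup_left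
  have hH' : (H ⊔ edge u v).Preconnected := hH.mono hle
  have huv : (H ⊔ edge u v).dist u v ≤ 1 := by
    by_cases h : u = v
    · simp [h]
    · exact (dist_eq_one_iff_adj.mpr (Or.inr ((edge_adj u v u v).mpr ⟨Or.inl ⟨rfl, rfl⟩, h⟩))).le
  have via (x y : V) :
      (H ⊔ edge u v).dist a b ≤ H.dist a x + (H ⊔ edge u v).dist x y + H.dist y b := by
    have := (hH' a x).dist_triangle_left b
    have := (hH' x y).dist_triangle_left b
    have := (hH a x).dist_le_of_le hle
    have := (hH y b).dist_le_of_le hle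
    omega
  refine le_antisymm (le_min ((hH a b).dist_le_of_le hle) (le_min ?_ ?_)) ?_
  · exact (via u v).trans (by omega)
  · exact (via v u).trans (by rw [dist_comm] at huv; omega)
  · obtain ⟨p, hp⟩ := (hH' a b).exists_walk_length_eq_dist
    exact hp ▸ hH.le_length_of_walk_sup_edge p

theorem Preconnected.dist_eq_of_dist_sup_edge_eq (hH : H.Preconnected) {p r : V}
    (hpr : ∀ x, H.dist x p + H.dist x r = H.dist p r) (u v : V)
    (hp : (H ⊔ edge u v).dist a p = (H ⊔ edge u v).dist b p)
    (hr : (H ⊔ edge u v).dist a r = (H ⊔ edge u v).dist b r) :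
    H.dist a p = H.dist b p := by
  have lip (x y : V) :
      H.dist x p ≤ H.dist x y + H.dist y p ∧ H.dist y p ≤ H.dist x y + H.dist x p :=
    ⟨(hH x y).dist_triangle_left p, dist_comm (u := y) ▸ (hH y x).dist_triangle_left p⟩
  simp only [hH.dist_sup_edge] at hp hr
  have := lip a u; have := lip a v; have := lip b u; have := lip b v
  have := hpr a; have := hpr b; have := hpr u; have := hpr v
  -- As `H.dist x p + H.dist x r` is constant, the new edge shortens the distance from `x` to at
  -- most one of `p`, `r`; if `a` gains towards one and `b` towards the other, comparing the two
  -- detours with the triangle inequality through `u` and `v` gives a contradiction.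
  omega

end SupEdge

section BoxProd

variable {α β : Type*} {G : SimpleGraph α} {H : SimpleGraph β}

theorem Preconnected.dist_boxProd (hG : G.Preconnected) (hH : H.Preconnected) (x y : α × β) :
    (G □ H).dist x y = G.dist x.1 y.1 + H.dist x.2 y.2 := by
  have h := edist_boxProd (G := G) (H := H) x y
  rw [← (hG.boxProd hH x y).coe_dist_eq_edist, ← (hG _ _).coe_dist_eq_edist,
    ← (hH _ _).coe_dist_eq_edist] at h
  exact_mod_cast h

end BoxProd

theorem pathGraph_dist {n : ℕ} (i j : Fin n) :
    (pathGraph n).dist i j = (((i : ℕ) : ℤ) - ((j : ℕ) : ℤ)).natAbs := by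
  refine le_antisymm ?_ ?_
  · suffices h : ∀ k (i j : Fin n), (j : ℕ) = i + k → (pathGraph n).dist i j ≤ k by
      rcases le_total (i : ℕ) j with hij | hij
      · exact (h ((j : ℕ) - i) i j (by omega)).trans_eq (by omega)
      · exact dist_comm.trans_le ((h ((i : ℕ) - j) j i (by omega)).trans_eq (by omega))
    intro k
    induction k with
    | zero => intro i j hij; simp [Fin.ext hij.symm]
    | succ k ih =>
      intro i j hij
      let j' : Fin n := ⟨i + k, by omega⟩
      have : (pathGraph n).dist j' j = 1 :=
        dist_eq_one_iff_adj.mpr (pathGraph_adj.mpr (by simp [j']; omega))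
      have := (pathGraph_preconnected n i j').dist_triangle_left j
      have := ih i j' rfl
      omega
  · obtain ⟨p, hp⟩ := (pathGraph_preconnected n i j).exists_walk_length_eq_dist
    rw [← hp]
    clear hp
    induction p with
    | nil => simp
    | cons h p ih => rw [pathGraph_adj] at h; rw [Walk.length_cons]; omega

end SimpleGraph

open SimpleGraph

theorem grid2_eq_boxProd (n m : ℕ) : grid2 n m = pathGraph n □ pathGraph m := by
  ext ⟨i, j⟩ ⟨i', j'⟩
  simp only [grid2, boxProd_adj, pathGraph_adj, Fin.ext_iff, abs_eq_max_neg]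
  omega

theorem grid2_preconnected (n m : ℕ) : (grid2 n m).Preconnected :=
  grid2_eq_boxProd n m ▸ (pathGraph_preconnected n).boxProd (pathGraph_preconnected m)

theorem grid2_dist {n m : ℕ} (a b : Fin n × Fin m) :
    (grid2 n m).dist a b =
      (((a.1 : ℕ) : ℤ) - ((b.1 : ℕ) : ℤ)).natAbs + (((a.2 : ℕ) : ℤ) - ((b.2 : ℕ) : ℤ)).natAbs := by
  rw [grid2_eq_boxProd, (pathGraph_preconnected n).dist_boxProd (pathGraph_preconnected m),
    pathGraph_dist, pathGraph_dist]

theorem metricDim_le_card {V : Type*} {H : SimpleGraph V} {R : Finset V}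
    (h : resolves H (R : Set V)) : metricDim H ≤ R.card :=
  Nat.sInf_le ⟨R, rfl, h⟩

theorem resolves.metricDim_le_four {V : Type*} {H : SimpleGraph V} {a b c d : V}
    (h : resolves H {a, b, c, d}) : metricDim H ≤ 4 := by
  classical
  exact (metricDim_le_card (R := {a, b, c, d}) (by simpa using h)).trans Finset.card_le_four

theorem stmt_12_general {m n : ℕ} (hn : 0 < n) (hm : 0 < m)
    (E F : Fin n × Fin m)
    (G' : SimpleGraph (Fin n × Fin m))
    (hG' : G' = grid2 n m ⊔ SimpleGraph.fromEdgeSet {s(E, F)}) :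
    resolves G'
      {(⟨0, hn⟩, ⟨0, hm⟩),
       (⟨n - 1, Nat.sub_lt hn one_pos⟩, ⟨0, hm⟩),
       (⟨n - 1, Nat.sub_lt hn one_pos⟩, ⟨m - 1, Nat.sub_lt hm one_pos⟩),
       (⟨0, hn⟩, ⟨m - 1, Nat.sub_lt hm one_pos⟩)} ∧
    metricDim G' ≤ 4 := by
  refine (fun hres => ⟨hres, hres.metricDim_le_four⟩) ?_
  subst hG'
  intro a b hab
  by_contra! h
  simp only [Set.mem_insert_iff, Set.mem_singleton_iff, forall_eq_or_imp, forall_eq] at h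
  obtain ⟨hP, hQ, hR, hS⟩ := h
  have hPR := (grid2_preconnected n m).dist_eq_of_dist_sup_edge_eq
    (fun x => by simp only [grid2_dist]; omega) E F hP hR
  have hQS := (grid2_preconnected n m).dist_eq_of_dist_sup_edge_eq
    (fun x => by simp only [grid2_dist]; omega) E F hQ hS
  simp only [grid2_dist] at hPR hQS
  exact hab (Prod.ext (Fin.ext (by omega)) (Fin.ext (by omega)))

/-- Theorem 4: for the rectangle grid with `m` rows and `n` columns and an extra edge
`e` added between any two non-adjacent vertices, the set of the four corners
`P = (1,1)`, `Q = (n,1)`, `R = (n,m)`, `S = (1,m)` is a resolving set of `G'`;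
consequently `β(G') ≤ 4`. -/
theorem stmt_12 {m n : ℕ} (hn : 0 < n) (hm : 0 < m)
    (E F : Fin n × Fin m) (hne : E ≠ F) (hadj : ¬ (grid2 n m).Adj E F)
    (G' : SimpleGraph (Fin n × Fin m))
    (hG' : G' = grid2 n m ⊔ SimpleGraph.fromEdgeSet {s(E, F)}) :
    resolves G'
      {(⟨0, hn⟩, ⟨0, hm⟩),
       (⟨n - 1, Nat.sub_lt hn one_pos⟩, ⟨0, hm⟩),
       (⟨n - 1, Nat.sub_lt hn one_pos⟩, ⟨m - 1, Nat.sub_lt hm one_pos⟩),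
       (⟨0, hn⟩, ⟨m - 1, Nat.sub_lt hm one_pos⟩)} ∧
    metricDim G' ≤ 4 :=
  stmt_12_general hn hm E F G' hG'
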